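/- For every i ∈ ℕ, every s ∈ F₂ with |s| ≤ i, and every x ∈ F₂ with |x| ≥ i + |s|, the set {t ∈ F₂ : |t| < i, |s⁻¹*t| < i, x ∈ B(t), and s⁻¹*x ∈ B(s⁻¹*t)} has at least i − |s| elements. -/

import Mathlib

open scoped Pointwise

/-- The free group on two generators. -/
abbrev F₂ := FreeGroup Bool

/-- The generator `a`. -/
def ga : F₂ := FreeGroup.of true

/-- The generator `b`. -/
def gb : F₂ := FreeGroup.of false

/-- The word length `|w|` of an element of the free group. -/
def wl (w : F₂) : ℕ := w.toWord.length

/-- The cylinder set `B(t)` of elements whose reduced word begins with the reduced word of `t`. -/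
def cyl (t : F₂) : Set F₂ := {x | ∃ y : F₂, x = t * y ∧ wl x = wl t + wl y}

namespace FGAux
open FreeGroup List

variable {α : Type*} [DecidableEq α]

def RR : (α × Bool) → (α × Bool) → Prop := fun a b => ¬(a.1 = b.1 ∧ a.2 = !b.2)

theorem reduce_eq_self_of_chain' : ∀ {L : List (α × Bool)}, List.Chain' RR L →
    FreeGroup.reduce L = L
  | [], _ => rfl
  | [a], _ => rfl
  | a :: b :: L, h => by
      have h2 : FreeGroup.reduce (b :: L) = b :: L := reduce_eq_self_of_chain' h.tail
      have hr : RR a b := (List.isChain_cons_cons.1 h).1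
      rw [FreeGroup.reduce.cons, h2]
      exact if_neg hr

theorem chain'_of_reduce_eq_self : ∀ {L : List (α × Bool)},
    FreeGroup.reduce L = L → List.Chain' RR L := by
  intro L
  induction L with
  | nil => intro _; exact List.isChain_nil
  | cons a L ih =>
    intro h
    rw [FreeGroup.reduce.cons] at h
    cases hr : FreeGroup.reduce L with
    | nil =>
      rw [hr] at h
      simp only [] at h
      have : L = [] := by
        have := congrArg List.length h
        simpa using this.symm
      subst this; exact List.isChain_singleton a
    | cons b tl =>
      rw [hr] at h
      dsimp only [] at h
      by_cases hc : a.1 = b.1 ∧ a.2 = !b.2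
      · rw [if_pos hc] at h
        have hsub : (b :: tl).Sublist L := by
          rw [← hr]; exact FreeGroup.Red.sublist FreeGroup.reduce.red
        have h1 := hsub.length_le
        have h2 := congrArg List.length h
        simp at h1 h2
        omega
      · rw [if_neg hc] at h
        have hL : L = b :: tl := by injection h with _ h2; exact h2.symm
        subst hL
        exact List.isChain_cons_cons.2 ⟨hc, ih hr⟩

theorem chain'_invRev {L : List (α × Bool)} (h : List.Chain' RR L) :
    List.Chain' RR (FreeGroup.invRev L) := by
  apply chain'_of_reduce_eq_self
  rw [FreeGroup.reduce_invRev, reduce_eq_self_of_chain' h]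

theorem invRev_cons (a : α × Bool) (L : List (α × Bool)) :
    FreeGroup.invRev (a :: L) = FreeGroup.invRev L ++ [(a.1, !a.2)] := by
  simp [FreeGroup.invRev]

theorem exists_k : ∀ (w v : List (α × Bool)), List.Chain' RR w → List.Chain' RR v →
    ∃ k, k ≤ w.length ∧ k ≤ v.length ∧ w.take k = v.take k ∧
      List.Chain' RR (FreeGroup.invRev (w.drop k) ++ v.drop k)
  | [], v, _, hv => ⟨0, by simp [FreeGroup.invRev], by simpa using hv⟩
  | a :: w, [], hw, _ => ⟨0, by simp, by simp, rfl, by simpa using chain'_invRev hw⟩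
  | a :: w, b :: v, hw, hv => by
    by_cases hab : a = b
    · obtain ⟨k, h1, h2, h3, h4⟩ := exists_k w v hw.tail hv.tail
      exact ⟨k + 1, by simpa using h1, by simpa using h2, by simp [h3, hab], by simpa using h4⟩
    · refine ⟨0, Nat.zero_le _, Nat.zero_le _, rfl, ?_⟩
      rw [List.drop_zero, List.drop_zero, List.Chain', List.isChain_append]
      refine ⟨chain'_invRev hw, hv, ?_⟩
      intro p hp q hq
      rw [invRev_cons] at hp
      simp only [List.getLast?_append, List.getLast?_singleton, Option.mem_def,
        Option.or, Option.some.injEq] at hp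
      simp only [List.head?_cons, Option.mem_def, Option.some.injEq] at hq
      subst hq
      obtain rfl := hp
      rintro ⟨e1, e2⟩
      exact hab (Prod.ext e1 (by simpa using e2))

end FGAux
namespace FGAux

theorem wl_mk {L : List (Bool × Bool)} (h : List.Chain' RR L) :
    wl (FreeGroup.mk L) = L.length := by
  unfold wl
  rw [FreeGroup.toWord_mk, reduce_eq_self_of_chain' h]

theorem chain'_toWord (g : F₂) : List.Chain' RR g.toWord :=
  chain'_of_reduce_eq_self (FreeGroup.reduce_toWord g)

end FGAux

open FGAux in
/-- Følner-type estimate: for `|s| ≤ i` and `|x| ≥ i + |s|`, the set of `t` with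
`|t| < i`, `|s⁻¹t| < i`, `x ∈ B(t)` and `s⁻¹x ∈ B(s⁻¹t)` has at least `i - |s|` elements. -/
theorem stmt_9 (i : ℕ) (s x : F₂) (hs : wl s ≤ i) (hx : i + wl s ≤ wl x) :
    i - wl s ≤
      {t : F₂ | wl t < i ∧ wl (s⁻¹ * t) < i ∧ x ∈ cyl t ∧ s⁻¹ * x ∈ cyl (s⁻¹ * t)}.ncard := by
  set S := {t : F₂ | wl t < i ∧ wl (s⁻¹ * t) < i ∧ x ∈ cyl t ∧ s⁻¹ * x ∈ cyl (s⁻¹ * t)} with hS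
  obtain ⟨k, hkw, hkv, htake, hchain⟩ :=
    exists_k s.toWord x.toWord (chain'_toWord s) (chain'_toWord x)
  have hwlen : wl s = s.toWord.length := rfl
  have hvlen : wl x = x.toWord.length := rfl
  -- key decomposition
  have key : ∀ ℓ, k ≤ ℓ → ℓ ≤ x.toWord.length →
      wl (s⁻¹ * FreeGroup.mk (x.toWord.take ℓ)) = (s.toWord.length - k) + (ℓ - k) := by
    intro ℓ hk hℓ
    have hdt : (x.toWord.take ℓ).drop k = (x.toWord.drop k).take (ℓ - k) := by
      rw [List.drop_take]
    have heq : s⁻¹ * FreeGroup.mk (x.toWord.take ℓ)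
        = FreeGroup.mk (FreeGroup.invRev (s.toWord.drop k) ++ (x.toWord.take ℓ).drop k) := by
      have hsdec : s = FreeGroup.mk (s.toWord.take k) * FreeGroup.mk (s.toWord.drop k) := by
        rw [FreeGroup.mul_mk, List.take_append_drop, FreeGroup.mk_toWord]
      have htdec : FreeGroup.mk (x.toWord.take ℓ)
          = FreeGroup.mk (s.toWord.take k) * FreeGroup.mk ((x.toWord.take ℓ).drop k) := by
        rw [FreeGroup.mul_mk, htake]
        congr 1
        conv_lhs => rw [← List.take_append_drop k (x.toWord.take ℓ)]
        rw [List.take_take, min_eq_left hk]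
      rw [← FreeGroup.mul_mk, ← FreeGroup.inv_mk]
      conv_lhs => rw [hsdec, htdec]
      group
    rw [heq, wl_mk]
    · simp only [List.length_append, FreeGroup.invRev_length, List.length_drop, hdt,
        List.length_take]
      omega
    · apply hchain.prefix
      rw [hdt]
      exact (List.prefix_append_right_inj _).2 (List.take_prefix _ _)
  have hxdec : wl (s⁻¹ * x) = (s.toWord.length - k) + (x.toWord.length - k) := by
    have := key x.toWord.length hkv le_rfl
    rwa [List.take_length, FreeGroup.mk_toWord] at this
  -- the family of prefixes
  set m := min i (i + 2 * k - s.toWord.length) with hm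
  have hm1 : m ≤ i := min_le_left _ _
  have hm2 : m ≤ i + 2 * k - s.toWord.length := min_le_right _ _
  have hm3 : i - wl s ≤ m - k := by omega
  set f : ℕ → F₂ := fun ℓ => FreeGroup.mk (x.toWord.take ℓ) with hf
  have hwlf : ∀ ℓ, ℓ ≤ x.toWord.length → wl (f ℓ) = ℓ := by
    intro ℓ hℓ
    rw [hf, wl_mk ((chain'_toWord x).take ℓ), List.length_take]
    omega
  have hmem : ∀ ℓ ∈ Finset.Ico k m, f ℓ ∈ S := by
    intro ℓ hℓ
    simp only [Finset.mem_Ico] at hℓ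
    obtain ⟨hk, hlm⟩ := hℓ
    have hli : ℓ < i := lt_of_lt_of_le hlm hm1
    have hlv : ℓ ≤ x.toWord.length := by omega
    have hkey := key ℓ hk hlv
    refine ⟨by rw [hwlf ℓ hlv]; exact hli, ?_, ?_, ?_⟩
    · rw [hkey]; omega
    · refine ⟨FreeGroup.mk (x.toWord.drop ℓ), ?_, ?_⟩
      · rw [hf, FreeGroup.mul_mk, List.take_append_drop, FreeGroup.mk_toWord]
      · rw [hwlf ℓ hlv, wl_mk ((chain'_toWord x).drop ℓ), List.length_drop]
        omega
    · refine ⟨FreeGroup.mk (x.toWord.drop ℓ), ?_, ?_⟩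
      · rw [mul_assoc]
        congr 1
        rw [hf, FreeGroup.mul_mk, List.take_append_drop, FreeGroup.mk_toWord]
      · rw [hxdec, hkey, wl_mk ((chain'_toWord x).drop ℓ), List.length_drop]
        omega
  have hinj : Set.InjOn f ↑(Finset.Ico k m) := by
    intro a ha b hb hab
    simp only [Finset.coe_Ico, Set.mem_Ico] at ha hb
    have h1 := hwlf a (by omega)
    have h2 := hwlf b (by omega)
    rw [hab] at h1
    omega
  have hfin : S.Finite := by
    apply Set.Finite.subset ((List.finite_length_le (Bool × Bool) i).image FreeGroup.mk)
    intro t ht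
    exact ⟨t.toWord, le_of_lt ht.1, FreeGroup.mk_toWord⟩
  calc i - wl s ≤ ((Finset.Ico k m).image f).card := by
        rw [Finset.card_image_of_injOn hinj, Nat.card_Ico]
        exact hm3
    _ = (↑((Finset.Ico k m).image f) : Set F₂).ncard := (Set.ncard_coe_finset _).symm
    _ ≤ S.ncard := by
        apply Set.ncard_le_ncard _ hfin
        intro t ht
        simp only [Finset.coe_image, Set.mem_image, Finset.mem_coe] at ht
        obtain ⟨ℓ, hℓ, rfl⟩ := ht
        exact hmem ℓ hℓ
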